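/- arXiv:1312.1255 — 3 statements merged into one kernel-verified Lean document; each statement's English description precedes it below -/
import Mathlib

section
/- Let X be a finite set and 𝒞 a finite set of clusters on X. If S and T are ST-sets of 𝒞 with S ∩ T ≠ ∅, then S ∪ T is an ST-set of 𝒞. -/
/-- Two clusters are compatible if one contains the other or they are disjoint. -/
def Compatible {α : Type*} [DecidableEq α] (A B : Finset α) : Prop :=
  A ⊆ B ∨ B ⊆ A ∨ A ∩ B = ∅

/-- A set of clusters is compatible if its elements are pairwise compatible. -/
def CompatibleSet {α : Type*} [DecidableEq α] (𝒞 : Finset (Finset α)) : Prop :=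
  ∀ A ∈ 𝒞, ∀ B ∈ 𝒞, Compatible A B

/-- The restriction 𝒞|S = { C ∩ S : C ∈ 𝒞 }. -/
def restrictCl {α : Type*} [DecidableEq α] (𝒞 : Finset (Finset α)) (S : Finset α) :
    Finset (Finset α) :=
  𝒞.image (· ∩ S)

/-- The removal 𝒞 ∖ S = { C \ S : C ∈ 𝒞 }. -/
def removeCl {α : Type*} [DecidableEq α] (𝒞 : Finset (Finset α)) (S : Finset α) :
    Finset (Finset α) :=
  𝒞.image (· \ S)

/-- S is an ST-set of 𝒞: S is compatible with every cluster of 𝒞 and 𝒞|S is compatible. -/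
def IsSTSet {α : Type*} [DecidableEq α] (𝒞 : Finset (Finset α)) (S : Finset α) : Prop :=
  (∀ C ∈ 𝒞, Compatible S C) ∧ CompatibleSet (restrictCl 𝒞 S)

/-- S is a maximal ST-set of 𝒞: an ST-set that is not a proper subset of any other ST-set. -/
def IsMaxSTSet {α : Type*} [DecidableEq α] (𝒞 : Finset (Finset α)) (S : Finset α) : Prop :=
  IsSTSet 𝒞 S ∧ ∀ T : Finset α, IsSTSet 𝒞 T → ¬ S ⊂ T

/-- The cluster set obtained after removing, in order, the sets of the list L. -/
def afterSeq {α : Type*} [DecidableEq α] (𝒞 : Finset (Finset α)) :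
    List (Finset α) → Finset (Finset α)
  | [] => 𝒞
  | S :: L => afterSeq (removeCl 𝒞 S) L

/-- L = S₁, …, S_k is an ST-set sequence for 𝒞: each S_i is an ST-set of 𝒞_{i-1}. -/
def IsSTSeq {α : Type*} [DecidableEq α] (𝒞 : Finset (Finset α)) : List (Finset α) → Prop
  | [] => True
  | S :: L => IsSTSet 𝒞 S ∧ IsSTSeq (removeCl 𝒞 S) L

/-- A tree sequence: an ST-set sequence whose final cluster set is compatible. -/
def IsTreeSeq {α : Type*} [DecidableEq α] (𝒞 : Finset (Finset α)) (L : List (Finset α)) : Prop :=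
  IsSTSeq 𝒞 L ∧ CompatibleSet (afterSeq 𝒞 L)

/-- The minimum length of an ST-set tree sequence for 𝒞. -/
noncomputable def minlen {α : Type*} [DecidableEq α] (𝒞 : Finset (Finset α)) : ℕ :=
  sInf {k : ℕ | ∃ L : List (Finset α), IsTreeSeq 𝒞 L ∧ L.length = k}

section Aux
variable {α : Type*} [DecidableEq α]

lemma inter_empty_of_subset {A B X Y : Finset α} (hA : A ⊆ X) (hB : B ⊆ Y)
    (h : X ∩ Y = ∅) : A ∩ B = ∅ := by
  apply Finset.subset_empty.mp
  rw [← h]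
  exact Finset.inter_subset_inter hA hB

lemma compat_union {S T C : Finset α} (hS : Compatible S C) (hT : Compatible T C)
    (hST : (S ∩ T).Nonempty) : Compatible (S ∪ T) C := by
  obtain ⟨x, hx⟩ := hST
  rw [Finset.mem_inter] at hx
  rcases hS with h1 | h1 | h1 <;> rcases hT with h2 | h2 | h2
  · exact Or.inl (Finset.union_subset h1 h2)
  · exact Or.inr (Or.inl (h2.trans Finset.subset_union_right))
  · exact absurd h2 (Finset.Nonempty.ne_empty ⟨x, Finset.mem_inter.mpr ⟨hx.2, h1 hx.1⟩⟩)
  · exact Or.inr (Or.inl (h1.trans Finset.subset_union_left))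
  · exact Or.inr (Or.inl (h1.trans Finset.subset_union_left))
  · exact Or.inr (Or.inl (h1.trans Finset.subset_union_left))
  · exact absurd h1 (Finset.Nonempty.ne_empty ⟨x, Finset.mem_inter.mpr ⟨hx.1, h2 hx.2⟩⟩)
  · exact Or.inr (Or.inl (h2.trans Finset.subset_union_right))
  · refine Or.inr (Or.inr ?_)
    rw [Finset.union_inter_distrib_right, h1, h2, Finset.union_empty]

/-- Classification: a set compatible with S and T, contained in S ∪ T,
with S ∩ T nonempty, is contained in S, in T, or contains S ∪ T. -/
lemma classify {S T A : Finset α} (hA : A ⊆ S ∪ T) (hAS : Compatible A S)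
    (hAT : Compatible A T) (hST : (S ∩ T).Nonempty) :
    A ⊆ S ∨ A ⊆ T ∨ S ∪ T ⊆ A := by
  obtain ⟨x, hx⟩ := hST
  rw [Finset.mem_inter] at hx
  rcases hAS with h1 | h1 | h1
  · exact Or.inl h1
  · rcases hAT with h2 | h2 | h2
    · exact Or.inr (Or.inl h2)
    · exact Or.inr (Or.inr (Finset.union_subset h1 h2))
    · exact absurd h2 (Finset.Nonempty.ne_empty ⟨x, Finset.mem_inter.mpr ⟨h1 hx.1, hx.2⟩⟩)
  · -- A ∩ S = ∅, so A ⊆ T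
    refine Or.inr (Or.inl fun a ha => ?_)
    rcases Finset.mem_union.mp (hA ha) with h | h
    · exact absurd h1 (Finset.Nonempty.ne_empty ⟨a, Finset.mem_inter.mpr ⟨ha, h⟩⟩)
    · exact h

lemma key {S T A B : Finset α} (hST : (S ∩ T).Nonempty)
    (hA : A ⊆ S ∪ T) (hB : B ⊆ S ∪ T)
    (hAS : Compatible A S) (hAT : Compatible A T)
    (hBS : Compatible B S) (hBT : Compatible B T)
    (h1 : Compatible (A ∩ S) (B ∩ S)) (h2 : Compatible (A ∩ T) (B ∩ T)) :
    Compatible A B := by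
  rcases classify hA hAS hAT hST with cA | cA | cA
  rotate_right
  · exact Or.inr (Or.inl (hB.trans cA))
  · -- A ⊆ S
    rcases classify hB hBS hBT hST with cB | cB | cB
    · -- both ⊆ S : use h1
      rwa [Finset.inter_eq_left.mpr cA, Finset.inter_eq_left.mpr cB] at h1
    · -- A ⊆ S, B ⊆ T : case on hAT
      rcases hAT with h | h | h
      · rwa [Finset.inter_eq_left.mpr h, Finset.inter_eq_left.mpr cB] at h2
      · exact Or.inr (Or.inl (cB.trans h))
      · exact Or.inr (Or.inr (inter_empty_of_subset (Finset.Subset.refl A) cB h))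
    · exact Or.inl (cA.trans (Finset.subset_union_left.trans cB))
  · -- A ⊆ T
    rcases classify hB hBS hBT hST with cB | cB | cB
    · -- A ⊆ T, B ⊆ S : case on hAS
      rcases hAS with h | h | h
      · rwa [Finset.inter_eq_left.mpr h, Finset.inter_eq_left.mpr cB] at h1
      · exact Or.inr (Or.inl (cB.trans h))
      · exact Or.inr (Or.inr (inter_empty_of_subset (Finset.Subset.refl A) cB h))
    · rwa [Finset.inter_eq_left.mpr cA, Finset.inter_eq_left.mpr cB] at h2
    · exact Or.inl (cA.trans (Finset.subset_union_right.trans cB))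

end Aux

/-- the union of two intersecting ST-sets is an ST-set. -/
theorem union_isSTSet_of_inter_nonempty {α : Type*} [Fintype α] [DecidableEq α]
    (𝒞 : Finset (Finset α)) (S T : Finset α)
    (hS : IsSTSet 𝒞 S) (hT : IsSTSet 𝒞 T) (hST : (S ∩ T).Nonempty) :
    IsSTSet 𝒞 (S ∪ T) := by
  obtain ⟨hS1, hS2⟩ := hS
  obtain ⟨hT1, hT2⟩ := hT
  constructor
  · exact fun C hC => compat_union (hS1 C hC) (hT1 C hC) hST
  · intro A hA B hB
    simp only [restrictCl, Finset.mem_image] at hA hB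
    obtain ⟨C, hC, rfl⟩ := hA
    obtain ⟨D, hD, rfl⟩ := hB
    have hSU : S ⊆ S ∪ T := Finset.subset_union_left
    have hTU : T ⊆ S ∪ T := Finset.subset_union_right
    have eCS : C ∩ (S ∪ T) ∩ S = C ∩ S := by
      rw [Finset.inter_assoc, Finset.inter_eq_right.mpr hSU]
    have eCT : C ∩ (S ∪ T) ∩ T = C ∩ T := by
      rw [Finset.inter_assoc, Finset.inter_eq_right.mpr hTU]
    have eDS : D ∩ (S ∪ T) ∩ S = D ∩ S := by
      rw [Finset.inter_assoc, Finset.inter_eq_right.mpr hSU]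
    have eDT : D ∩ (S ∪ T) ∩ T = D ∩ T := by
      rw [Finset.inter_assoc, Finset.inter_eq_right.mpr hTU]
    have compS : ∀ E ∈ 𝒞, Compatible (E ∩ (S ∪ T)) S := by
      intro E hE
      rcases hS1 E hE with h | h | h
      · exact Or.inr (Or.inl (Finset.subset_inter h hSU))
      · exact Or.inl (Finset.inter_subset_left.trans h)
      · refine Or.inr (Or.inr ?_)
        apply Finset.subset_empty.mp
        rw [← h, Finset.inter_comm S E]
        exact Finset.inter_subset_inter Finset.inter_subset_left (Finset.Subset.refl S)
    have compT : ∀ E ∈ 𝒞, Compatible (E ∩ (S ∪ T)) T := by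
      intro E hE
      rcases hT1 E hE with h | h | h
      · exact Or.inr (Or.inl (Finset.subset_inter h hTU))
      · exact Or.inl (Finset.inter_subset_left.trans h)
      · refine Or.inr (Or.inr ?_)
        apply Finset.subset_empty.mp
        rw [← h, Finset.inter_comm T E]
        exact Finset.inter_subset_inter Finset.inter_subset_left (Finset.Subset.refl T)
    have memS : ∀ E ∈ 𝒞, E ∩ S ∈ restrictCl 𝒞 S := fun E hE =>
      Finset.mem_image.mpr ⟨E, hE, rfl⟩
    have memT : ∀ E ∈ 𝒞, E ∩ T ∈ restrictCl 𝒞 T := fun E hE =>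
      Finset.mem_image.mpr ⟨E, hE, rfl⟩
    refine key hST Finset.inter_subset_right Finset.inter_subset_right
      (compS C hC) (compT C hC) (compS D hD) (compT D hD) ?_ ?_
    · rw [eCS, eDS]; exact hS2 _ (memS C hC) _ (memS D hD)
    · rw [eCT, eDT]; exact hT2 _ (memT C hC) _ (memT D hD)
end

section
/- Let X be a finite set and 𝒞 a finite set of clusters on X. The maximal ST-sets of 𝒞 partition X: they are nonempty (when X is nonempty), pairwise disjoint, and every element of X belongs to exactly one maximal ST-set of 𝒞. -/
section Aux

variable {α : Type*} [DecidableEq α]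

/-- The key mixed case: clusters restricted to two overlapping ST-sets stay compatible. -/
lemma mixedAux {S T C D : Finset α}
    (h2 : Compatible S D) (h3 : Compatible T C)
    (h5 : Compatible (C ∩ S) (D ∩ S)) (h6 : Compatible (C ∩ T) (D ∩ T))
    (hCT : C ∩ T ⊆ S) (hDS : D ∩ S ⊆ T) :
    Compatible (C ∩ S) (D ∩ T) := by
  have empt : ∀ {E F : Finset α}, (C ∩ S) ∩ (D ∩ T) ⊆ E ∩ F → E ∩ F = ∅ →
      Compatible (C ∩ S) (D ∩ T) := by
    intro E F hsub he
    exact Or.inr (Or.inr (Finset.subset_empty.mp (he ▸ hsub)))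
  rcases h5 with h5 | h5 | h5
  · left
    intro a ha
    have h' := h5 ha
    simp only [Finset.mem_inter] at *
    exact ⟨h'.1, hDS (Finset.mem_inter.mpr h')⟩
  · rcases h6 with h6 | h6 | h6
    · rcases h2 with h2 | h2 | h2
      · rcases h3 with h3 | h3 | h3
        · right; left
          intro a ha
          simp only [Finset.mem_inter] at *
          have hac : a ∈ C := h3 ha.2
          exact ⟨hac, hCT (Finset.mem_inter.mpr ⟨hac, ha.2⟩)⟩
        · left
          intro a ha
          simp only [Finset.mem_inter] at *
          exact ⟨h2 ha.2, h3 ha.1⟩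
        · apply empt _ (by rwa [Finset.inter_comm] at h3)
          intro a ha; simp only [Finset.mem_inter] at *; exact ⟨ha.1.1, ha.2.2⟩
      · right; left
        intro a ha
        simp only [Finset.mem_inter] at *
        have := h5 (Finset.mem_inter.mpr ⟨ha.1, h2 ha.1⟩)
        simpa using this
      · apply empt _ h2
        intro a ha; simp only [Finset.mem_inter] at *; exact ⟨ha.1.2, ha.2.1⟩
    · right; left
      intro a ha
      have h' := h6 ha
      simp only [Finset.mem_inter] at *
      exact ⟨h'.1, hCT (Finset.mem_inter.mpr h')⟩
    · apply empt _ h6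
      intro a ha; simp only [Finset.mem_inter] at *
      exact ⟨⟨ha.1.1, ha.2.2⟩, ha.2.1, ha.2.2⟩
  · apply empt _ h5
    intro a ha; simp only [Finset.mem_inter] at *
    exact ⟨⟨ha.1.1, ha.1.2⟩, ha.2.1, ha.1.2⟩

/-- A singleton is always an ST-set. -/
lemma singleton_isSTSet (𝒞 : Finset (Finset α)) (x : α) : IsSTSet 𝒞 {x} := by
  constructor
  · intro C _
    by_cases hx : x ∈ C
    · exact Or.inl (Finset.singleton_subset_iff.mpr hx)
    · refine Or.inr (Or.inr ?_)
      rw [Finset.singleton_inter_of_notMem hx]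
  · intro A hA B hB
    simp only [restrictCl, Finset.mem_image] at hA hB
    obtain ⟨C, _, rfl⟩ := hA
    obtain ⟨D, _, rfl⟩ := hB
    have hc : C ∩ {x} = ∅ ∨ C ∩ {x} = {x} :=
      Finset.subset_singleton_iff.mp (Finset.inter_subset_right)
    have hd : D ∩ {x} = ∅ ∨ D ∩ {x} = {x} :=
      Finset.subset_singleton_iff.mp (Finset.inter_subset_right)
    rcases hc with h | h <;> rcases hd with h' | h'
    · rw [h]; exact Or.inl (Finset.empty_subset _)
    · rw [h]; exact Or.inl (Finset.empty_subset _)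
    · rw [h']; exact Or.inr (Or.inl (Finset.empty_subset _))
    · rw [h, h']; exact Or.inl subset_rfl

/-- The structure of clusters relative to a union of two overlapping ST-sets. -/
lemma keyCases {𝒞 : Finset (Finset α)} {S T : Finset α} {x : α}
    (hS : IsSTSet 𝒞 S) (hT : IsSTSet 𝒞 T) (hxS : x ∈ S) (hxT : x ∈ T)
    {C : Finset α} (hC : C ∈ 𝒞) :
    (S ∪ T ⊆ C) ∨ (C ∩ (S ∪ T) ⊆ S) ∨ (C ∩ (S ∪ T) ⊆ T) := by
  rcases hS.1 C hC with h1 | h1 | h1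
  · rcases hT.1 C hC with h2 | h2 | h2
    · exact Or.inl (Finset.union_subset h1 h2)
    · exact Or.inr (Or.inr (Finset.inter_subset_left.trans h2))
    · exfalso
      have : x ∈ T ∩ C := Finset.mem_inter.mpr ⟨hxT, h1 hxS⟩
      simp [h2] at this
  · exact Or.inr (Or.inl (Finset.inter_subset_left.trans h1))
  · refine Or.inr (Or.inr ?_)
    intro a ha
    simp only [Finset.mem_inter, Finset.mem_union] at ha
    rcases ha.2 with h | h
    · exfalso
      have : a ∈ S ∩ C := Finset.mem_inter.mpr ⟨h, ha.1⟩
      simp [h1] at this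
    · exact h

/-- The union of two overlapping ST-sets is an ST-set. -/
lemma union_isSTSet {𝒞 : Finset (Finset α)} {S T : Finset α}
    (hS : IsSTSet 𝒞 S) (hT : IsSTSet 𝒞 T) (hne : (S ∩ T).Nonempty) :
    IsSTSet 𝒞 (S ∪ T) := by
  obtain ⟨x, hx⟩ := hne
  rw [Finset.mem_inter] at hx
  obtain ⟨hxS, hxT⟩ := hx
  constructor
  · intro C hC
    rcases hS.1 C hC with h1 | h1 | h1
    · rcases hT.1 C hC with h2 | h2 | h2
      · exact Or.inl (Finset.union_subset h1 h2)
      · exact Or.inr (Or.inl (h2.trans Finset.subset_union_right))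
      · exact absurd (Finset.mem_inter.mpr ⟨hxT, h1 hxS⟩) (by simp [h2])
    · exact Or.inr (Or.inl (h1.trans Finset.subset_union_left))
    · rcases hT.1 C hC with h2 | h2 | h2
      · exact absurd (Finset.mem_inter.mpr ⟨hxS, h2 hxT⟩) (by simp [h1])
      · exact Or.inr (Or.inl (h2.trans Finset.subset_union_right))
      · refine Or.inr (Or.inr ?_)
        rw [Finset.eq_empty_iff_forall_notMem]
        intro a ha
        simp only [Finset.mem_inter, Finset.mem_union] at ha
        rcases ha.1 with h | h
        · exact absurd (Finset.mem_inter.mpr ⟨h, ha.2⟩) (by simp [h1])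
        · exact absurd (Finset.mem_inter.mpr ⟨h, ha.2⟩) (by simp [h2])
  · -- restriction compatible
    intro A hA B hB
    simp only [restrictCl, Finset.mem_image] at hA hB
    obtain ⟨C, hC, rfl⟩ := hA
    obtain ⟨D, hD, rfl⟩ := hB
    have eqS : ∀ {E : Finset α}, E ∩ (S ∪ T) ⊆ S → E ∩ (S ∪ T) = E ∩ S := by
      intro E hE
      apply Finset.Subset.antisymm
      · intro a ha
        exact Finset.mem_inter.mpr ⟨(Finset.mem_inter.mp ha).1, hE ha⟩
      · exact Finset.inter_subset_inter subset_rfl Finset.subset_union_left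
    have eqT : ∀ {E : Finset α}, E ∩ (S ∪ T) ⊆ T → E ∩ (S ∪ T) = E ∩ T := by
      intro E hE
      apply Finset.Subset.antisymm
      · intro a ha
        exact Finset.mem_inter.mpr ⟨(Finset.mem_inter.mp ha).1, hE ha⟩
      · exact Finset.inter_subset_inter subset_rfl Finset.subset_union_right
    have memS : ∀ {E : Finset α}, E ∈ 𝒞 → E ∩ S ∈ restrictCl 𝒞 S := by
      intro E hE; exact Finset.mem_image_of_mem _ hE
    have memT : ∀ {E : Finset α}, E ∈ 𝒞 → E ∩ T ∈ restrictCl 𝒞 T := by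
      intro E hE; exact Finset.mem_image_of_mem _ hE
    rcases keyCases hS hT hxS hxT hC with hkC | hkC | hkC
    · refine Or.inr (Or.inl ?_)
      have : C ∩ (S ∪ T) = S ∪ T := Finset.inter_eq_right.mpr hkC
      rw [this]
      exact Finset.inter_subset_right
    · rcases keyCases hS hT hxS hxT hD with hkD | hkD | hkD
      · refine Or.inl ?_
        have : D ∩ (S ∪ T) = S ∪ T := Finset.inter_eq_right.mpr hkD
        rw [this]
        exact Finset.inter_subset_right
      · rw [eqS hkC, eqS hkD]
        exact hS.2 _ (memS hC) _ (memS hD)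
      · rw [eqS hkC, eqT hkD]
        exact mixedAux (hS.1 D hD) (hT.1 C hC)
          (hS.2 _ (memS hC) _ (memS hD)) (hT.2 _ (memT hC) _ (memT hD))
          (Finset.inter_subset_inter subset_rfl Finset.subset_union_right |>.trans hkC)
          (Finset.inter_subset_inter subset_rfl Finset.subset_union_left |>.trans hkD)
    · rcases keyCases hS hT hxS hxT hD with hkD | hkD | hkD
      · refine Or.inl ?_
        have : D ∩ (S ∪ T) = S ∪ T := Finset.inter_eq_right.mpr hkD
        rw [this]
        exact Finset.inter_subset_right
      · rw [eqT hkC, eqS hkD]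
        exact mixedAux (hT.1 D hD) (hS.1 C hC)
          (hT.2 _ (memT hC) _ (memT hD)) (hS.2 _ (memS hC) _ (memS hD))
          (Finset.inter_subset_inter subset_rfl Finset.subset_union_left |>.trans hkC)
          (Finset.inter_subset_inter subset_rfl Finset.subset_union_right |>.trans hkD)
      · rw [eqT hkC, eqT hkD]
        exact hT.2 _ (memT hC) _ (memT hD)

end Aux

/-- the maximal ST-sets of 𝒞 partition X: they are nonempty (when X is
nonempty), pairwise disjoint, and every element of X lies in exactly one of them. -/
theorem maxSTSets_partition {α : Type*} [Fintype α] [DecidableEq α]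
    (𝒞 : Finset (Finset α)) :
    (Nonempty α → ∀ S : Finset α, IsMaxSTSet 𝒞 S → S.Nonempty) ∧
    (∀ S T : Finset α, IsMaxSTSet 𝒞 S → IsMaxSTSet 𝒞 T → S ≠ T → S ∩ T = ∅) ∧
    (∀ x : α, ∃! S : Finset α, IsMaxSTSet 𝒞 S ∧ x ∈ S) := by
  classical
  -- uniqueness core: two maximal ST-sets sharing a point are equal
  have huniq : ∀ S T : Finset α, IsMaxSTSet 𝒞 S → IsMaxSTSet 𝒞 T →
      ∀ x, x ∈ S → x ∈ T → S = T := by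
    intro S T hS hT x hxS hxT
    have hU : IsSTSet 𝒞 (S ∪ T) :=
      union_isSTSet hS.1 hT.1 ⟨x, Finset.mem_inter.mpr ⟨hxS, hxT⟩⟩
    have h1 : S = S ∪ T := by
      by_contra h
      exact hS.2 _ hU (Finset.ssubset_iff_subset_ne.mpr ⟨Finset.subset_union_left, h⟩)
    have h2 : T = S ∪ T := by
      by_contra h
      exact hT.2 _ hU (Finset.ssubset_iff_subset_ne.mpr ⟨Finset.subset_union_right, h⟩)
    exact h1.trans h2.symm
  -- existence of a maximal ST-set containing any x
  have hex : ∀ x : α, ∃ S : Finset α, IsMaxSTSet 𝒞 S ∧ x ∈ S := by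
    intro x
    set 𝒮 : Finset (Finset α) := Finset.univ.filter (fun S => IsSTSet 𝒞 S ∧ x ∈ S) with h𝒮
    have hmem : ∀ S : Finset α, S ∈ 𝒮 ↔ IsSTSet 𝒞 S ∧ x ∈ S := by
      intro S; simp [h𝒮]
    have hne : 𝒮.Nonempty :=
      ⟨{x}, (hmem _).mpr ⟨singleton_isSTSet 𝒞 x, Finset.mem_singleton_self x⟩⟩
    obtain ⟨S, hS𝒮, hSmax⟩ := Finset.exists_max_image 𝒮 Finset.card hne
    rw [hmem] at hS𝒮
    refine ⟨S, ⟨hS𝒮.1, ?_⟩, hS𝒮.2⟩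
    intro T hT hsub
    have hxT : x ∈ T := hsub.subset hS𝒮.2
    have hT𝒮 : T ∈ 𝒮 := (hmem _).mpr ⟨hT, hxT⟩
    have := hSmax T hT𝒮
    exact absurd this (not_le.mpr (Finset.card_lt_card hsub))
  refine ⟨?_, ?_, ?_⟩
  · rintro ⟨x⟩ S hS
    rw [Finset.nonempty_iff_ne_empty]
    intro h
    subst h
    exact hS.2 {x} (singleton_isSTSet 𝒞 x)
      (Finset.empty_ssubset.mpr (Finset.singleton_nonempty x))
  · intro S T hS hT hne
    rw [Finset.eq_empty_iff_forall_notMem]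
    intro x hx
    rw [Finset.mem_inter] at hx
    exact hne (huniq S T hS hT x hx.1 hx.2)
  · intro x
    obtain ⟨S, hS, hxS⟩ := hex x
    exact ⟨S, ⟨hS, hxS⟩, fun T ⟨hT, hxT⟩ => huniq T S hT hS x hxT hxS⟩
end

section
/- Let X be a finite set and 𝒞 a finite set of clusters on X. If there exists an ST-set tree sequence for 𝒞 of length k, then there exists an ST-set tree sequence S₁, …, S_m for 𝒞 with m ≤ k in which each S_i is a maximal ST-set of 𝒞_{i−1}. In particular, the minimum tree-sequence length minlen(𝒞) is attained by a sequence consisting of maximal ST-sets at every step. -/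
/-- L = S₁, …, S_k is a sequence in which each S_i is a maximal ST-set of 𝒞_{i-1}. -/
def IsMaxSTSeq {α : Type*} [DecidableEq α] (𝒞 : Finset (Finset α)) : List (Finset α) → Prop
  | [] => True
  | S :: L => IsMaxSTSet 𝒞 S ∧ IsMaxSTSeq (removeCl 𝒞 S) L

section

variable {α : Type*} [DecidableEq α]

theorem Compatible.sdiff {A B : Finset α} (h : Compatible A B) (U : Finset α) :
    Compatible (A \ U) (B \ U) := by
  rcases h with h | h | h
  · exact .inl (Finset.sdiff_subset_sdiff h le_rfl)
  · exact .inr (.inl (Finset.sdiff_subset_sdiff h le_rfl))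
  · have : (A \ U) ∩ (B \ U) = (A ∩ B) \ U := inf_sdiff.symm
    exact .inr (.inr (by rw [this, h, Finset.empty_sdiff]))

theorem CompatibleSet.removeCl {𝒞 : Finset (Finset α)} (h : CompatibleSet 𝒞) (U : Finset α) :
    CompatibleSet (_root_.removeCl 𝒞 U) := by
  simp only [CompatibleSet, _root_.removeCl, Finset.forall_mem_image]
  exact fun A hA B hB => (h A hA B hB).sdiff U

theorem removeCl_removeCl (𝒞 : Finset (Finset α)) (S T : Finset α) :
    removeCl (removeCl 𝒞 S) T = removeCl 𝒞 (S ∪ T) := by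
  simp only [removeCl, Finset.image_image, Function.comp_def, sdiff_sdiff_left, Finset.sup_eq_union]

theorem removeCl_removeCl_sdiff (𝒞 : Finset (Finset α)) (S T : Finset α) :
    removeCl (removeCl 𝒞 S) (T \ S) = removeCl 𝒞 (S ∪ T) := by
  rw [removeCl_removeCl, Finset.union_sdiff_self_eq_union]

theorem restrictCl_removeCl (𝒞 : Finset (Finset α)) (S U : Finset α) :
    restrictCl (removeCl 𝒞 U) (S \ U) = removeCl (restrictCl 𝒞 S) U := by
  simp only [restrictCl, removeCl, Finset.image_image, Function.comp_def]
  exact Finset.image_congr fun C _ => inf_sdiff.symm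

theorem IsSTSet.sdiff_removeCl {𝒞 : Finset (Finset α)} {S : Finset α} (hS : IsSTSet 𝒞 S)
    (U : Finset α) : IsSTSet (removeCl 𝒞 U) (S \ U) := by
  refine ⟨?_, ?_⟩
  · simp only [removeCl, Finset.forall_mem_image]
    exact fun C hC => (hS.1 C hC).sdiff U
  · rw [restrictCl_removeCl]
    exact hS.2.removeCl U

theorem isTreeSeq_cons {𝒞 : Finset (Finset α)} {S : Finset α} {L : List (Finset α)} :
    IsTreeSeq 𝒞 (S :: L) ↔ IsSTSet 𝒞 S ∧ IsTreeSeq (removeCl 𝒞 S) L :=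
  and_assoc

theorem IsTreeSeq.exists_isTreeSeq_removeCl :
    ∀ {𝒞 : Finset (Finset α)} {L : List (Finset α)}, IsTreeSeq 𝒞 L → ∀ U : Finset α,
      ∃ M : List (Finset α), IsTreeSeq (removeCl 𝒞 U) M ∧ M.length ≤ L.length
  | _, [], hL, _ => ⟨[], ⟨trivial, hL.2.removeCl _⟩, le_rfl⟩
  | 𝒞, S :: L, hL, U => by
    obtain ⟨hS, hL⟩ := isTreeSeq_cons.1 hL
    obtain ⟨M, hM, hMlen⟩ := hL.exists_isTreeSeq_removeCl (U \ S)
    rw [removeCl_removeCl_sdiff, Finset.union_comm, ← removeCl_removeCl_sdiff] at hM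
    exact ⟨S \ U :: M, isTreeSeq_cons.2 ⟨hS.sdiff_removeCl U, hM⟩, Nat.succ_le_succ hMlen⟩

theorem IsSTSet.exists_isMaxSTSet_superset [Finite α] {𝒞 : Finset (Finset α)} {S : Finset α}
    (hS : IsSTSet 𝒞 S) : ∃ T, IsMaxSTSet 𝒞 T ∧ S ⊆ T :=
  let ⟨T, hST, hT⟩ := Finite.exists_le_maximal hS
  ⟨T, ⟨hT.prop, fun _ hT' => hT.not_gt hT'⟩, hST⟩

theorem IsTreeSeq.exists_isMaxSTSeq [Finite α] {𝒞 : Finset (Finset α)} {L : List (Finset α)}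
    (hL : IsTreeSeq 𝒞 L) :
    ∃ L' : List (Finset α), IsTreeSeq 𝒞 L' ∧ IsMaxSTSeq 𝒞 L' ∧ L'.length ≤ L.length := by
  match L, hL with
  | [], hL => exact ⟨[], hL, trivial, le_rfl⟩
  | S :: L, hL =>
    obtain ⟨hS, hL⟩ := isTreeSeq_cons.1 hL
    obtain ⟨T, hT, hST⟩ := hS.exists_isMaxSTSet_superset
    obtain ⟨M, hM, hMlen⟩ := hL.exists_isTreeSeq_removeCl (T \ S)
    rw [removeCl_removeCl_sdiff, Finset.union_eq_right.2 hST] at hM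
    obtain ⟨M', hM', hM'max, hM'len⟩ := hM.exists_isMaxSTSeq
    exact ⟨T :: M', isTreeSeq_cons.2 ⟨hT.1, hM'⟩, ⟨hT, hM'max⟩,
      Nat.succ_le_succ (hM'len.trans hMlen)⟩
termination_by L.length

theorem minlen_le {𝒞 : Finset (Finset α)} {L : List (Finset α)} (hL : IsTreeSeq 𝒞 L) :
    minlen 𝒞 ≤ L.length :=
  Nat.sInf_le ⟨L, hL, rfl⟩

theorem exists_isTreeSeq_length_eq_minlen {𝒞 : Finset (Finset α)} {L : List (Finset α)}
    (hL : IsTreeSeq 𝒞 L) : ∃ L₀ : List (Finset α), IsTreeSeq 𝒞 L₀ ∧ L₀.length = minlen 𝒞 :=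
  Nat.sInf_mem (s := {k | ∃ L : List (Finset α), IsTreeSeq 𝒞 L ∧ L.length = k})
    ⟨L.length, L, hL, rfl⟩

end

/-- any tree sequence of length k can be replaced by a tree sequence of
length at most k consisting of maximal ST-sets at every step; in particular minlen 𝒞
is attained by such a sequence. -/
theorem exists_maximal_treeSeq {α : Type*} [Fintype α] [DecidableEq α]
    (𝒞 : Finset (Finset α)) (k : ℕ)
    (h : ∃ L : List (Finset α), IsTreeSeq 𝒞 L ∧ L.length = k) :
    (∃ L' : List (Finset α), IsTreeSeq 𝒞 L' ∧ IsMaxSTSeq 𝒞 L' ∧ L'.length ≤ k) ∧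
    (∃ L' : List (Finset α), IsTreeSeq 𝒞 L' ∧ IsMaxSTSeq 𝒞 L' ∧ L'.length = minlen 𝒞) := by
  obtain ⟨L, hL, rfl⟩ := h
  obtain ⟨L₀, hL₀, hL₀len⟩ := exists_isTreeSeq_length_eq_minlen hL
  obtain ⟨L', hL', hL'max, hL'len⟩ := hL₀.exists_isMaxSTSeq
  exact ⟨hL.exists_isMaxSTSeq,
    ⟨L', hL', hL'max, le_antisymm (hL₀len ▸ hL'len) (minlen_le hL')⟩⟩
end
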